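/- arXiv:0911.4185 — 5 statements merged into one kernel-verified Lean document; each statement's English description precedes it below -/
import Mathlib

section
/- Z(Ĝ) = ψ⁻¹(Z(G)), and consequently ψ(Z(Ĝ)) = Z(G). -/
/-- Abstract setting: `Ghat` is generated by the image of `g : X → Ghat`, `G` acts on `X`,
`ψ : Ghat →* G` is a surjective homomorphism with `w * g x * w⁻¹ = g (ψ w • x)`, and every
element of the center of `G` acts trivially on `X`.  Then `Z(Ghat) = ψ⁻¹(Z(G))`, and
consequently `ψ(Z(Ghat)) = Z(G)`. -/
theorem center_eq_comap_center {Ghat G X : Type*} [Group Ghat] [Group G] [MulAction G X]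
    (g : X → Ghat) (hgen : Subgroup.closure (Set.range g) = ⊤)
    (ψ : Ghat →* G) (hsurj : Function.Surjective ψ)
    (hconj : ∀ (w : Ghat) (x : X), w * g x * w⁻¹ = g (ψ w • x))
    (hztriv : ∀ z ∈ Subgroup.center G, ∀ x : X, z • x = x) :
    Subgroup.center Ghat = (Subgroup.center G).comap ψ ∧
      (Subgroup.center Ghat).map ψ = Subgroup.center G := by
  have hmain : Subgroup.center Ghat = (Subgroup.center G).comap ψ := by
    ext w
    simp only [Subgroup.mem_comap]
    constructor
    · intro hw
      rw [Subgroup.mem_center_iff] at hw ⊢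
      intro h
      obtain ⟨v, rfl⟩ := hsurj h
      rw [← map_mul, ← map_mul, hw v]
    · intro hw
      rw [Subgroup.mem_center_iff]
      have hcomm : ∀ u ∈ Subgroup.closure (Set.range g), u * w = w * u := by
        intro u hu
        induction hu using Subgroup.closure_induction with
        | mem u hu =>
          obtain ⟨x, rfl⟩ := hu
          have := hconj w x
          rw [hztriv _ hw x] at this
          exact (mul_inv_eq_iff_eq_mul.mp this).symm
        | one => simp
        | mul a b _ _ ha hb => rw [mul_assoc, hb, ← mul_assoc, ha, mul_assoc]
        | inv a _ ha =>
          calc a⁻¹ * w = a⁻¹ * (w * a) * a⁻¹ := by group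
            _ = w * a⁻¹ := by rw [← ha]; group
      intro h
      exact hcomm h (hgen ▸ Subgroup.mem_top h)
  refine ⟨hmain, ?_⟩
  rw [hmain, Subgroup.map_comap_eq_self_of_surjective hsurj]
end

section
/- The restriction of ψ to Z(Ĝ) induces a group isomorphism Z(Ĝ)/ker ψ ≅ Z(G). -/
/-!
A surjection maps the center into the center, so `ψ` restricts to `Z(Ĝ) → Z(G)` with kernel
`ker ψ ∩ Z(Ĝ)`. It is onto: if `ψ w` is central, it acts trivially on `X`, so
`w g(x) w⁻¹ = g(ψ w • x) = g(x)`; thus `w` commutes with a generating set of `Ĝ` and is central.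
-/

open Function

namespace Subgroup

variable {G H : Type*} [Group G] [Group H]

theorem map_mem_center_of_surjective {f : G →* H} (hf : Surjective f) {z : G}
    (hz : z ∈ center G) : f z ∈ center H := by
  rw [mem_center_iff]
  intro h
  obtain ⟨w, rfl⟩ := hf h
  rw [← map_mul, ← map_mul, mem_center_iff.mp hz w]

theorem mem_center_of_commute_of_closure_eq_top {s : Set G} (hs : closure s = ⊤) {w : G}
    (hw : ∀ x ∈ s, Commute x w) : w ∈ center G := by
  rw [← centralizer_univ, ← coe_top, ← hs, centralizer_closure, mem_centralizer_iff]
  exact hw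

end Subgroup

theorem mem_center_of_forall_smul_eq {Ghat G X : Type*} [Group Ghat] [Group G] [MulAction G X]
    {g : X → Ghat} (hgen : Subgroup.closure (Set.range g) = ⊤) {ψ : Ghat →* G}
    (hconj : ∀ (w : Ghat) (x : X), w * g x * w⁻¹ = g (ψ w • x)) {w : Ghat}
    (hw : ∀ x : X, ψ w • x = x) : w ∈ Subgroup.center Ghat := by
  refine Subgroup.mem_center_of_commute_of_closure_eq_top hgen ?_
  rintro _ ⟨x, rfl⟩
  have hfix : w * g x * w⁻¹ = g x := by rw [hconj, hw]
  exact (mul_inv_eq_iff_eq_mul.mp hfix).symm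

namespace MonoidHom

variable {G H : Type*} [Group G] [Group H]

def centerRestrict (f : G →* H) (hf : Surjective f) : Subgroup.center G →* Subgroup.center H :=
  (f.domRestrict _).codRestrict _ fun z => Subgroup.map_mem_center_of_surjective hf z.2

theorem ker_centerRestrict (f : G →* H) (hf : Surjective f) :
    (f.centerRestrict hf).ker = f.ker.subgroupOf (Subgroup.center G) := by
  exact (ker_codRestrict _ _ _).trans (ker_domRestrict _ _)

end MonoidHom

/-- Abstract setting: `Ghat` is generated by the image of `g : X → Ghat`, `G` acts on `X`,
`ψ : Ghat →* G` is a surjective homomorphism with `w * g x * w⁻¹ = g (ψ w • x)`, and every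
element of the center of `G` acts trivially on `X`.  Then the restriction of `ψ` to the
center of `Ghat` induces a group isomorphism `Z(Ghat)/ker ψ ≃* Z(G)`. -/
theorem center_quotient_ker_iso_center {Ghat G X : Type*} [Group Ghat] [Group G] [MulAction G X]
    (g : X → Ghat) (hgen : Subgroup.closure (Set.range g) = ⊤)
    (ψ : Ghat →* G) (hsurj : Function.Surjective ψ)
    (hconj : ∀ (w : Ghat) (x : X), w * g x * w⁻¹ = g (ψ w • x))
    (hztriv : ∀ z ∈ Subgroup.center G, ∀ x : X, z • x = x) :
    ∃ e : (Subgroup.center Ghat) ⧸ (ψ.ker.subgroupOf (Subgroup.center Ghat)) ≃*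
        Subgroup.center G,
      ∀ z : Subgroup.center Ghat, ((e (QuotientGroup.mk z)) : G) = ψ (z : Ghat) := by
  have hsurj_center : Surjective (ψ.centerRestrict hsurj) := by
    rintro ⟨z, hz⟩
    obtain ⟨w, rfl⟩ := hsurj z
    exact ⟨⟨w, mem_center_of_forall_smul_eq hgen hconj (hztriv _ hz)⟩, rfl⟩
  exact ⟨(QuotientGroup.quotientMulEquivOfEq (ψ.ker_centerRestrict hsurj).symm).trans
    (QuotientGroup.quotientKerEquivOfSurjective _ hsurj_center), fun _ => rfl⟩
end

section
/- Let α ∈ R and σ ∈ V⁰ with α + σ ∈ R. Then for every n ∈ ℤ, (t̂_α^σ)ⁿ = t̂_α^{nσ}, that is, (ŵ_{α+σ} ŵ_α)ⁿ = ŵ_{α+nσ} ŵ_α. -/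
/-- The reflection `s_α(u) = u - (u, α^∨) α` associated to a vector `α`, where
`α^∨ = 2α/(α,α)` and `B` is the bilinear form. -/
noncomputable def reflMap {V : Type*} [AddCommGroup V] [Module ℝ V] (B : V →ₗ[ℝ] V →ₗ[ℝ] ℝ)
    (α : V) : V → V :=
  fun u => u - ((2 * B u α) / B α α) • α

/-- The defining relations of the presented group `Ŵ`: (I) `ŵ_α² = 1` and
(II) `ŵ_α ŵ_β ŵ_α = ŵ_{s_α(β)}` for `α, β ∈ R`. -/
def eawRels {V : Type*} [AddCommGroup V] [Module ℝ V] (B : V →ₗ[ℝ] V →ₗ[ℝ] ℝ)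
    (R : Set V) : Set (FreeGroup R) :=
  {r | ∃ α : R, r = FreeGroup.of α * FreeGroup.of α} ∪
  {r | ∃ α β γ : R, (γ : V) = reflMap B (α : V) (β : V) ∧
        r = FreeGroup.of α * FreeGroup.of β * FreeGroup.of α * (FreeGroup.of γ)⁻¹}

/-- The group `Ŵ` presented by generators `ŵ_α` (`α ∈ R`) and relations (I), (II). -/
abbrev EAW {V : Type*} [AddCommGroup V] [Module ℝ V] (B : V →ₗ[ℝ] V →ₗ[ℝ] ℝ)
    (R : Set V) :=
  PresentedGroup (eawRels B R)

/-- The generator `ŵ_α` of `Ŵ`. -/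
def wgen {V : Type*} [AddCommGroup V] [Module ℝ V] (B : V →ₗ[ℝ] V →ₗ[ℝ] ℝ)
    (R : Set V) (α : V) (hα : α ∈ R) : EAW B R :=
  PresentedGroup.of (⟨α, hα⟩ : R)

/-- The element `t̂_α^σ = ŵ_{α+σ} ŵ_α` of `Ŵ`. -/
def tgen {V : Type*} [AddCommGroup V] [Module ℝ V] (B : V →ₗ[ℝ] V →ₗ[ℝ] ℝ)
    (R : Set V) (α σ : V) (hα : α ∈ R) (hασ : α + σ ∈ R) : EAW B R :=
  wgen B R (α + σ) hασ * wgen B R α hα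

/-! The roots `α + kσ` (`k ∈ ℤ`) all have the same square length `(α, α)`, and the reflection in
`α + mσ` sends `α + kσ` to `-(α + (2m - k)σ)`. Since `ŵ_{-x} = ŵ_x`, the generators
`w k = ŵ_{α+kσ}` are involutions with `w k · w (k-1) · w k = w (k+1)`. Hence
`w (k+1) · w k = w k · w (k-1)` does not depend on `k`, and telescoping gives
`(w 1 · w 0)ⁿ = w n · w 0`. -/

theorem Int.forall_of_reflect {P : ℤ → Prop} (h0 : P 0) (h1 : P 1)
    (hP : ∀ m k, P m → P k → P (2 * m - k)) (n : ℤ) : P n := by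
  suffices ∀ n, P n ∧ P (n + 1) from (this n).1
  intro n
  induction n using Int.induction_on with
  | zero => simpa using And.intro h0 h1
  | succ i ih => exact ⟨ih.2, by convert hP _ _ ih.2 ih.1 using 1; ring⟩
  | pred i ih =>
    refine ⟨?_, by simpa using ih.1⟩
    simpa [two_mul] using hP _ _ ih.1 ih.2

theorem zpow_mul_eq_of_conj_eq {G : Type*} [Group G] (w : ℤ → G) (hw : ∀ k, w k * w k = 1)
    (hconj : ∀ k, w k * w (k - 1) * w k = w (k + 1)) (n : ℤ) :
    (w 1 * w 0) ^ n = w n * w 0 := by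
  have hcancel : ∀ k (g : G), w k * (w k * g) = g := fun k g => by
    rw [← mul_assoc, hw, one_mul]
  have hshift : ∀ k, w (k + 1) * w k = w k * w (k - 1) := fun k => by
    rw [← hconj, mul_assoc, hw, mul_one]
  have hconst : ∀ k : ℤ, w (k + 1) * w k = w 1 * w 0 := fun k => by
    have hper : Function.Periodic (fun k : ℤ => w (k + 1) * w k) 1 := fun k => by
      simpa using hshift (k + 1)
    simpa using hper.int_mul_eq k
  induction n using Int.induction_on with
  | zero => rw [zpow_zero, hw]
  | succ i ih =>
    rw [zpow_add_one, ← (Commute.self_zpow _ _).eq, ih, ← hconst i, mul_assoc, hcancel]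
  | pred i ih =>
    rw [sub_eq_neg_add, zpow_add, zpow_neg_one, ih, ← hconst (-i - 1), sub_add_cancel,
      mul_inv_rev, inv_eq_of_mul_eq_one_right (hw _), inv_eq_of_mul_eq_one_right (hw _),
      mul_assoc, hcancel, neg_add_eq_sub]

section Reflections

variable {V : Type*} [AddCommGroup V] [Module ℝ V] {B : V →ₗ[ℝ] V →ₗ[ℝ] ℝ}

theorem reflMap_self {x : V} (hx : B x x ≠ 0) : reflMap B x x = -x := by
  rw [reflMap, mul_div_assoc, div_self hx, mul_one, two_smul]
  abel

theorem apply_add_zsmul_add_zsmul {α σ : V} (hσl : ∀ u, B σ u = 0) (hσr : ∀ u, B u σ = 0)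
    (m k : ℤ) : B (α + m • σ) (α + k • σ) = B α α := by
  simp [hσl, hσr]

theorem reflMap_add_zsmul {α σ : V} (hσl : ∀ u, B σ u = 0) (hσr : ∀ u, B u σ = 0)
    (hα : B α α ≠ 0) (m k : ℤ) :
    reflMap B (α + m • σ) (α + k • σ) = -(α + (2 * m - k) • σ) := by
  rw [reflMap, apply_add_zsmul_add_zsmul hσl hσr, apply_add_zsmul_add_zsmul hσl hσr,
    mul_div_assoc, div_self hα, mul_one]
  simp only [← Int.cast_smul_eq_zsmul ℝ]
  push_cast
  module

theorem neg_mem_of_forall_reflMap_mem {R : Set V} (hnon : ∀ α ∈ R, B α α ≠ 0)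
    (hclos : ∀ α ∈ R, ∀ β ∈ R, reflMap B α β ∈ R) {x : V} (hx : x ∈ R) : -x ∈ R :=
  reflMap_self (hnon x hx) ▸ hclos x hx x hx

end Reflections

section Presentation

variable {V : Type*} [AddCommGroup V] [Module ℝ V] (B : V →ₗ[ℝ] V →ₗ[ℝ] ℝ) (R : Set V)

theorem wgen_mul_self {x : V} (hx : x ∈ R) : wgen B R x hx * wgen B R x hx = 1 :=
  (QuotientGroup.eq_one_iff _).2 <| Subgroup.subset_normalClosure <| Or.inl ⟨⟨x, hx⟩, rfl⟩

theorem wgen_mul_wgen_mul_wgen {a b c : V} (ha : a ∈ R) (hb : b ∈ R) (hc : c ∈ R)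
    (h : reflMap B a b = c) : wgen B R a ha * wgen B R b hb * wgen B R a ha = wgen B R c hc :=
  mul_inv_eq_one.1 <| (QuotientGroup.eq_one_iff _).2 <| Subgroup.subset_normalClosure <|
    Or.inr ⟨⟨a, ha⟩, ⟨b, hb⟩, ⟨c, hc⟩, h.symm, rfl⟩

theorem wgen_neg {x : V} (hx : x ∈ R) (hnx : -x ∈ R) (hxx : B x x ≠ 0) :
    wgen B R (-x) hnx = wgen B R x hx := by
  rw [← wgen_mul_wgen_mul_wgen B R hx hx hnx (reflMap_self hxx), wgen_mul_self, one_mul]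

end Presentation

theorem tgen_zpow_general {V : Type*} [AddCommGroup V] [Module ℝ V]
    (B : V →ₗ[ℝ] V →ₗ[ℝ] ℝ) (R : Set V)
    (hsym : ∀ u v : V, B u v = B v u)
    (hnon : ∀ α ∈ R, B α α ≠ 0)
    (hclos : ∀ α ∈ R, ∀ β ∈ R, reflMap B α β ∈ R)
    (α σ : V) (hα : α ∈ R) (hσ : ∀ u : V, B σ u = 0) (hασ : α + σ ∈ R) (n : ℤ) :
    ∃ hn : α + n • σ ∈ R,
      (tgen B R α σ hα hασ) ^ n = wgen B R (α + n • σ) hn * wgen B R α hα := by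
  have hσ' : ∀ u, B u σ = 0 := fun u => (hsym u σ).trans (hσ u)
  have hrefl := reflMap_add_zsmul hσ hσ' (hnon α hα)
  have hneg {x : V} : x ∈ R → -x ∈ R := neg_mem_of_forall_reflMap_mem hnon hclos
  have hmem : ∀ k : ℤ, α + k • σ ∈ R :=
    Int.forall_of_reflect (by simpa using hα) (by simpa using hασ) fun m k hm hk => by
      simpa [hrefl] using hneg (hclos _ hm _ hk)
  have hconj (k : ℤ) : wgen B R (α + k • σ) (hmem k) * wgen B R (α + (k - 1) • σ) (hmem _) *
      wgen B R (α + k • σ) (hmem k) = wgen B R (α + (k + 1) • σ) (hmem _) := by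
    rw [wgen_mul_wgen_mul_wgen B R _ _ (hneg (hmem (k + 1))) (by rw [hrefl]; ring_nf),
      wgen_neg B R (hmem _) _ (by rw [apply_add_zsmul_add_zsmul hσ hσ']; exact hnon α hα)]
  refine ⟨hmem n, ?_⟩
  have key := zpow_mul_eq_of_conj_eq (fun k => wgen B R (α + k • σ) (hmem k))
    (fun k => wgen_mul_self B R _) hconj n
  simpa [tgen] using key

/-- For `α ∈ R` and `σ` in the radical with `α + σ ∈ R`, we have `α + nσ ∈ R` and
`(t̂_α^σ)ⁿ = t̂_α^{nσ}`, i.e. `(ŵ_{α+σ} ŵ_α)ⁿ = ŵ_{α+nσ} ŵ_α`, for every `n ∈ ℤ`. -/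
theorem tgen_zpow {V : Type*} [AddCommGroup V] [Module ℝ V]
    (B : V →ₗ[ℝ] V →ₗ[ℝ] ℝ) (R : Set V)
    (hsym : ∀ u v : V, B u v = B v u)
    (hpsd : ∀ v : V, 0 ≤ B v v)
    (hnon : ∀ α ∈ R, B α α ≠ 0)
    (hclos : ∀ α ∈ R, ∀ β ∈ R, reflMap B α β ∈ R)
    (α σ : V) (hα : α ∈ R) (hσ : ∀ u : V, B σ u = 0) (hασ : α + σ ∈ R) (n : ℤ) :
    ∃ hn : α + n • σ ∈ R,
      (tgen B R α σ hα hασ) ^ n = wgen B R (α + n • σ) hn * wgen B R α hα :=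
  tgen_zpow_general B R hsym hnon hclos α σ hα hσ hασ n
end

section
/- Suppose α, α' ∈ R lie in the same orbit under W, and β, β' ∈ R satisfy (α, β^∨) = (α', β'^∨). Then for all σ, δ ∈ V⁰ with α+σ, β+δ, β'+δ ∈ R (hence also α'+σ ∈ R), one has [t̂_β^δ, t̂_α^σ] = [t̂_{β'}^δ, t̂_{α'}^σ] in Ŵ. -/
/-- `β` lies in the orbit of `α` under the Weyl group `W`, the group generated by the
reflections `s_γ`, `γ ∈ R` (expressed via a finite sequence of reflections applied to `α`;
this is equivalent since each reflection is an involution). -/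
def WOrbit {V : Type*} [AddCommGroup V] [Module ℝ V] (B : V →ₗ[ℝ] V →ₗ[ℝ] ℝ)
    (R : Set V) (α β : V) : Prop :=
  ∃ l : List R, β = l.foldr (fun γ u => reflMap B (γ : V) u) α

namespace CPI

variable {V : Type*} [AddCommGroup V] [Module ℝ V] (B : V →ₗ[ℝ] V →ₗ[ℝ] ℝ)

lemma reflMap_def (γ u : V) : reflMap B γ u = u - ((2 * B u γ) / B γ γ) • γ := rfl

noncomputable def reflLin (γ : V) : V →ₗ[ℝ] V :=
  LinearMap.id - (2 / B γ γ) • (B.flip γ).smulRight γ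

lemma reflMap_eq_lin (γ : V) : reflMap B γ = ⇑(reflLin B γ) := by
  funext u
  simp only [reflMap, reflLin, LinearMap.sub_apply, LinearMap.id_apply, LinearMap.smul_apply,
    LinearMap.smulRight_apply, LinearMap.flip_apply, smul_smul]
  congr 1
  rw [div_mul_eq_mul_div]

lemma reflMap_add (γ u v : V) : reflMap B γ (u + v) = reflMap B γ u + reflMap B γ v := by
  rw [reflMap_eq_lin]; exact map_add _ u v

lemma reflMap_sub (γ u v : V) : reflMap B γ (u - v) = reflMap B γ u - reflMap B γ v := by
  rw [reflMap_eq_lin]; exact map_sub _ u v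

lemma reflMap_smul (γ : V) (t : ℝ) (u : V) : reflMap B γ (t • u) = t • reflMap B γ u := by
  rw [reflMap_eq_lin]; exact map_smul _ t u

lemma B_reflMap_self (γ u : V) (h : B γ γ ≠ 0) : B (reflMap B γ u) γ = -(B u γ) := by
  simp only [reflMap, map_sub, map_smul, LinearMap.sub_apply, LinearMap.smul_apply, smul_eq_mul]
  rw [div_mul_cancel₀ _ h]
  ring

lemma reflMap_invol (γ u : V) : reflMap B γ (reflMap B γ u) = u := by
  by_cases h : B γ γ = 0
  · simp [reflMap, h]
  · have h1 : B (reflMap B γ u) γ = -(B u γ) := B_reflMap_self B γ u h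
    conv_lhs => rw [reflMap_def B γ (reflMap B γ u), h1]
    rw [show (2 * -(B u γ)) / B γ γ = -((2 * B u γ) / B γ γ) by ring, neg_smul,
      sub_neg_eq_add, reflMap_def]
    abel

lemma B_reflMap_left (hsym : ∀ u v : V, B u v = B v u) (γ u w : V) :
    B (reflMap B γ u) w = B u (reflMap B γ w) := by
  simp only [reflMap, map_sub, map_smul, LinearMap.sub_apply, LinearMap.smul_apply, smul_eq_mul]
  rw [hsym γ w]
  ring

lemma reflMap_conj (hsym : ∀ u v : V, B u v = B v u) (γ b u : V) :
    reflMap B γ (reflMap B b (reflMap B γ u)) = reflMap B (reflMap B γ b) u := by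
  have h1 : B (reflMap B γ b) (reflMap B γ b) = B b b := by
    rw [B_reflMap_left B hsym, reflMap_invol]
  have h2 : B u (reflMap B γ b) = B (reflMap B γ u) b := (B_reflMap_left B hsym γ u b).symm
  conv_lhs => rw [reflMap_def B b (reflMap B γ u)]
  rw [reflMap_sub, reflMap_smul, reflMap_invol]
  conv_rhs => rw [reflMap_def B (reflMap B γ b) u]
  rw [h1, h2]

lemma reflMap_rad (γ v : V) (h : B v γ = 0) : reflMap B γ v = v := by
  simp [reflMap, h]

lemma reflMap_shift (hsym : ∀ u v : V, B u v = B v u) {v : V} (hv : ∀ w : V, B v w = 0)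
    (γ u : V) : reflMap B (γ + v) u = reflMap B γ u - (2 * B u γ / B γ γ) • v := by
  have e1 : B u (γ + v) = B u γ := by
    rw [map_add, hsym u v, hv u, add_zero]
  have e2 : B (γ + v) (γ + v) = B γ γ := by
    simp only [map_add, LinearMap.add_apply]
    rw [hsym γ v]
    simp [hv]
  rw [reflMap_def B (γ + v) u, e1, e2, reflMap_def B γ u, smul_add]
  abel

lemma transl_inv (hsym : ∀ u v : V, B u v = B v u) {v : V} (hv : ∀ w : V, B v w = 0)
    (γ u : V) : reflMap B γ (reflMap B (γ + v) u) = u - (2 * B u γ / B γ γ) • v := by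
  rw [reflMap_shift B hsym hv γ u, reflMap_sub, reflMap_smul, reflMap_invol,
    reflMap_rad B γ v (hv γ)]

variable (R : Set V)

lemma rel_one {r : FreeGroup R} (hr : r ∈ eawRels B R) :
    PresentedGroup.mk (eawRels B R) r = 1 :=
  (QuotientGroup.eq_one_iff r).mpr (Subgroup.subset_normalClosure hr)

lemma wgen_sq (γ : V) (h : γ ∈ R) : wgen B R γ h * wgen B R γ h = 1 := by
  have := rel_one B R (Or.inl ⟨⟨γ, h⟩, rfl⟩)
  rwa [map_mul] at this

lemma wgen_inv (γ : V) (h : γ ∈ R) : (wgen B R γ h)⁻¹ = wgen B R γ h :=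
  inv_eq_of_mul_eq_one_right (wgen_sq B R γ h)

lemma wgen_eq {v w : V} {hv : v ∈ R} {hw : w ∈ R} (h : v = w) :
    wgen B R v hv = wgen B R w hw := by subst h; rfl

lemma wgen_braid (a b : V) (ha : a ∈ R) (hb : b ∈ R) (hc : reflMap B a b ∈ R) :
    wgen B R a ha * wgen B R b hb * wgen B R a ha = wgen B R (reflMap B a b) hc := by
  have := rel_one B R (Or.inr ⟨⟨a, ha⟩, ⟨b, hb⟩, ⟨reflMap B a b, hc⟩, rfl, rfl⟩)
  rw [map_mul, map_mul, map_mul, map_inv] at this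
  exact mul_inv_eq_one.mp this

noncomputable def rPerm (γ : V) : Equiv.Perm V :=
  ⟨reflMap B γ, reflMap B γ, fun u => reflMap_invol B γ u, fun u => reflMap_invol B γ u⟩

lemma rPerm_apply (γ u : V) : rPerm B γ u = reflMap B γ u := rfl

noncomputable def piW (hsym : ∀ u v : V, B u v = B v u) : EAW B R →* Equiv.Perm V :=
  PresentedGroup.toGroup (f := fun j : R => rPerm B (j : V)) (by
    rintro r (⟨a, rfl⟩ | ⟨a, b, c, hc, rfl⟩)
    · rw [map_mul, FreeGroup.lift_apply_of]
      refine Equiv.ext fun u => ?_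
      simp only [Equiv.Perm.mul_apply, Equiv.Perm.one_apply, rPerm_apply]
      exact reflMap_invol B _ u
    · rw [map_mul, map_mul, map_mul, map_inv, FreeGroup.lift_apply_of, FreeGroup.lift_apply_of,
        FreeGroup.lift_apply_of, mul_inv_eq_one]
      refine Equiv.ext fun u => ?_
      simp only [Equiv.Perm.mul_apply, rPerm_apply]
      rw [hc]
      exact reflMap_conj B hsym _ _ u)

lemma piW_wgen (hsym : ∀ u v : V, B u v = B v u) (γ : V) (h : γ ∈ R) :
    piW B R hsym (wgen B R γ h) = rPerm B γ := by
  unfold piW wgen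
  exact PresentedGroup.toGroup.of _

def conjSet (hsym : ∀ u v : V, B u v = B v u) : Subgroup (EAW B R) where
  carrier := {g | ∀ (γ : V) (hγ : γ ∈ R),
    (∃ h2 : piW B R hsym g γ ∈ R,
        g * wgen B R γ hγ * g⁻¹ = wgen B R (piW B R hsym g γ) h2) ∧
    (∃ h3 : piW B R hsym g⁻¹ γ ∈ R,
        g⁻¹ * wgen B R γ hγ * g = wgen B R (piW B R hsym g⁻¹ γ) h3)}
  one_mem' := by
    intro γ hγ
    have hv : piW B R hsym (1 : EAW B R) γ = γ := by
      rw [map_one, Equiv.Perm.one_apply]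
    have hv' : piW B R hsym ((1 : EAW B R)⁻¹) γ = γ := by
      rw [inv_one, map_one, Equiv.Perm.one_apply]
    constructor
    · refine ⟨by rw [hv]; exact hγ, ?_⟩
      calc (1 : EAW B R) * wgen B R γ hγ * (1 : EAW B R)⁻¹ = wgen B R γ hγ := by
            rw [one_mul, inv_one, mul_one]
        _ = wgen B R (piW B R hsym (1 : EAW B R) γ) _ := (wgen_eq B R hv).symm
    · refine ⟨by rw [hv']; exact hγ, ?_⟩
      calc (1 : EAW B R)⁻¹ * wgen B R γ hγ * (1 : EAW B R) = wgen B R γ hγ := by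
            rw [inv_one, one_mul, mul_one]
        _ = wgen B R (piW B R hsym ((1 : EAW B R)⁻¹) γ) _ := (wgen_eq B R hv').symm
  mul_mem' := by
    intro g1 g2 hg1 hg2 γ hγ
    constructor
    · obtain ⟨m2, e2⟩ := (hg2 γ hγ).1
      obtain ⟨m1, e1⟩ := (hg1 _ m2).1
      have hv : piW B R hsym (g1 * g2) γ = piW B R hsym g1 (piW B R hsym g2 γ) := by
        rw [map_mul]; rfl
      refine ⟨by rw [hv]; exact m1, ?_⟩
      calc g1 * g2 * wgen B R γ hγ * (g1 * g2)⁻¹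
          = g1 * (g2 * wgen B R γ hγ * g2⁻¹) * g1⁻¹ := by group
        _ = g1 * wgen B R (piW B R hsym g2 γ) m2 * g1⁻¹ := by rw [e2]
        _ = wgen B R (piW B R hsym g1 (piW B R hsym g2 γ)) m1 := e1
        _ = wgen B R (piW B R hsym (g1 * g2) γ) _ := (wgen_eq B R hv).symm
    · obtain ⟨m1, e1⟩ := (hg1 γ hγ).2
      obtain ⟨m2, e2⟩ := (hg2 _ m1).2
      have hv : piW B R hsym ((g1 * g2)⁻¹) γ
          = piW B R hsym g2⁻¹ (piW B R hsym g1⁻¹ γ) := by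
        rw [mul_inv_rev, map_mul]; rfl
      refine ⟨by rw [hv]; exact m2, ?_⟩
      calc (g1 * g2)⁻¹ * wgen B R γ hγ * (g1 * g2)
          = g2⁻¹ * (g1⁻¹ * wgen B R γ hγ * g1) * g2 := by group
        _ = g2⁻¹ * wgen B R (piW B R hsym g1⁻¹ γ) m1 * g2 := by rw [e1]
        _ = wgen B R (piW B R hsym g2⁻¹ (piW B R hsym g1⁻¹ γ)) m2 := e2
        _ = wgen B R (piW B R hsym ((g1 * g2)⁻¹) γ) _ := (wgen_eq B R hv).symm
  inv_mem' := by
    intro g hg γ hγ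
    constructor
    · obtain ⟨m, e⟩ := (hg γ hγ).2
      refine ⟨m, ?_⟩
      calc g⁻¹ * wgen B R γ hγ * g⁻¹⁻¹ = g⁻¹ * wgen B R γ hγ * g := by rw [inv_inv]
        _ = wgen B R (piW B R hsym g⁻¹ γ) m := e
    · obtain ⟨m, e⟩ := (hg γ hγ).1
      have hv : piW B R hsym (g⁻¹⁻¹) γ = piW B R hsym g γ := by rw [inv_inv]
      refine ⟨by rw [hv]; exact m, ?_⟩
      calc g⁻¹⁻¹ * wgen B R γ hγ * g⁻¹ = g * wgen B R γ hγ * g⁻¹ := by rw [inv_inv]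
        _ = wgen B R (piW B R hsym g γ) m := e
        _ = wgen B R (piW B R hsym (g⁻¹⁻¹) γ) _ := (wgen_eq B R hv).symm

lemma mem_conjSet (hsym : ∀ u v : V, B u v = B v u) {g : EAW B R} :
    g ∈ conjSet B R hsym ↔ ∀ (γ : V) (hγ : γ ∈ R),
    (∃ h2 : piW B R hsym g γ ∈ R,
        g * wgen B R γ hγ * g⁻¹ = wgen B R (piW B R hsym g γ) h2) ∧
    (∃ h3 : piW B R hsym g⁻¹ γ ∈ R,
        g⁻¹ * wgen B R γ hγ * g = wgen B R (piW B R hsym g⁻¹ γ) h3) := Iff.rfl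

lemma of_mem_conjSet (hsym : ∀ u v : V, B u v = B v u)
    (hclos : ∀ a ∈ R, ∀ b ∈ R, reflMap B a b ∈ R) (j : R) :
    PresentedGroup.of (rels := eawRels B R) j ∈ conjSet B R hsym := by
  rw [mem_conjSet]
  intro γ hγ
  have hofj : (PresentedGroup.of (rels := eawRels B R) j) = wgen B R (j : V) j.2 := rfl
  have hπ : piW B R hsym (wgen B R (j : V) j.2) γ = reflMap B (j : V) γ := by
    rw [piW_wgen, rPerm_apply]
  have hπi : piW B R hsym ((wgen B R (j : V) j.2)⁻¹) γ = reflMap B (j : V) γ := by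
    rw [map_inv, piW_wgen]
    rfl
  rw [hofj]
  constructor
  · refine ⟨by rw [hπ]; exact hclos _ j.2 _ hγ, ?_⟩
    calc wgen B R (j : V) j.2 * wgen B R γ hγ * (wgen B R (j : V) j.2)⁻¹
        = wgen B R (j : V) j.2 * wgen B R γ hγ * wgen B R (j : V) j.2 := by
          rw [wgen_inv]
      _ = wgen B R (reflMap B (j : V) γ) (hclos _ j.2 _ hγ) :=
          wgen_braid B R _ _ j.2 hγ _
      _ = wgen B R (piW B R hsym (wgen B R (j : V) j.2) γ) _ := (wgen_eq B R hπ).symm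
  · refine ⟨by rw [hπi]; exact hclos _ j.2 _ hγ, ?_⟩
    calc (wgen B R (j : V) j.2)⁻¹ * wgen B R γ hγ * wgen B R (j : V) j.2
        = wgen B R (j : V) j.2 * wgen B R γ hγ * wgen B R (j : V) j.2 := by
          rw [wgen_inv]
      _ = wgen B R (reflMap B (j : V) γ) (hclos _ j.2 _ hγ) :=
          wgen_braid B R _ _ j.2 hγ _
      _ = wgen B R (piW B R hsym ((wgen B R (j : V) j.2)⁻¹) γ) _ := (wgen_eq B R hπi).symm

lemma conj_wgen (hsym : ∀ u v : V, B u v = B v u)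
    (hclos : ∀ a ∈ R, ∀ b ∈ R, reflMap B a b ∈ R)
    (g : EAW B R) (γ : V) (hγ : γ ∈ R) :
    ∃ h2 : piW B R hsym g γ ∈ R,
      g * wgen B R γ hγ * g⁻¹ = wgen B R (piW B R hsym g γ) h2 := by
  have hg : g ∈ conjSet B R hsym :=
    PresentedGroup.generated_by _ (conjSet B R hsym)
      (fun j => of_mem_conjSet B R hsym hclos j) g
  exact (((mem_conjSet B R hsym).mp hg) γ hγ).1

-- ### List lemmas

noncomputable def wfold (l : List R) (u : V) : V := l.foldr (fun γ v => reflMap B (γ : V) v) u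

lemma wfold_cons (j : R) (l : List R) (u : V) :
    wfold B R (j :: l) u = reflMap B (j : V) (wfold B R l u) := rfl

lemma wfold_add (l : List R) (u v : V) :
    wfold B R l (u + v) = wfold B R l u + wfold B R l v := by
  induction l with
  | nil => rfl
  | cons j l ih => rw [wfold_cons, wfold_cons, wfold_cons, ih, reflMap_add]

lemma wfold_sub (l : List R) (u v : V) :
    wfold B R l (u - v) = wfold B R l u - wfold B R l v := by
  induction l with
  | nil => rfl
  | cons j l ih => rw [wfold_cons, wfold_cons, wfold_cons, ih, reflMap_sub]

lemma wfold_smul (l : List R) (t : ℝ) (u : V) :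
    wfold B R l (t • u) = t • wfold B R l u := by
  induction l with
  | nil => rfl
  | cons j l ih => rw [wfold_cons, wfold_cons, ih, reflMap_smul]

lemma wfold_rad (l : List R) (v : V) (hv : ∀ w : V, B v w = 0) :
    wfold B R l v = v := by
  induction l with
  | nil => rfl
  | cons j l ih => rw [wfold_cons, ih, reflMap_rad B _ v (hv _)]

lemma wfold_mem (hclos : ∀ a ∈ R, ∀ b ∈ R, reflMap B a b ∈ R)
    (l : List R) {u : V} (hu : u ∈ R) : wfold B R l u ∈ R := by
  induction l with
  | nil => exact hu
  | cons j l ih => exact hclos _ j.2 _ ih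

def gprod (l : List R) : EAW B R :=
  (l.map fun j => PresentedGroup.of (rels := eawRels B R) j).prod

lemma gprod_cons (j : R) (l : List R) :
    gprod B R (j :: l) = PresentedGroup.of (rels := eawRels B R) j * gprod B R l := by
  simp [gprod]

lemma piW_gprod (hsym : ∀ u v : V, B u v = B v u) (l : List R) (u : V) :
    piW B R hsym (gprod B R l) u = wfold B R l u := by
  induction l with
  | nil =>
      show piW B R hsym (gprod B R []) u = u
      simp [gprod]
  | cons j l ih =>
      rw [gprod_cons, map_mul, Equiv.Perm.mul_apply, ih, wfold_cons]
      rw [show PresentedGroup.of (rels := eawRels B R) j = wgen B R (j : V) j.2 from rfl,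
        piW_wgen, rPerm_apply]

-- ### commutator decomposition

lemma piW_tgen_inv (hsym : ∀ u v : V, B u v = B v u) (β δ : V) (hβ : β ∈ R)
    (hδ : ∀ u : V, B δ u = 0) (hβδ : β + δ ∈ R) (u : V) :
    piW B R hsym ((tgen B R β δ hβ hβδ)⁻¹) u = u - (2 * B u β / B β β) • δ := by
  have h1 : (tgen B R β δ hβ hβδ)⁻¹ = wgen B R β hβ * wgen B R (β + δ) hβδ := by
    show (wgen B R (β + δ) hβδ * wgen B R β hβ)⁻¹ = _
    rw [mul_inv_rev, wgen_inv, wgen_inv]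
  rw [h1, map_mul, Equiv.Perm.mul_apply, piW_wgen, piW_wgen, rPerm_apply, rPerm_apply]
  exact transl_inv B hsym hδ β u

lemma comm_decomp (hsym : ∀ u v : V, B u v = B v u)
    (hclos : ∀ a ∈ R, ∀ b ∈ R, reflMap B a b ∈ R)
    (α β σ δ : V) (hα : α ∈ R) (hβ : β ∈ R)
    (hσ : ∀ u : V, B σ u = 0) (hδ : ∀ u : V, B δ u = 0)
    (hασ : α + σ ∈ R) (hβδ : β + δ ∈ R) :
    ∃ (h1 : α - (2 * B α β / B β β) • δ ∈ R) (h2 : α + σ - (2 * B α β / B β β) • δ ∈ R),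
      (tgen B R β δ hβ hβδ)⁻¹ * (tgen B R α σ hα hασ)⁻¹ * tgen B R β δ hβ hβδ *
          tgen B R α σ hα hασ =
        wgen B R (α - (2 * B α β / B β β) • δ) h1 *
          wgen B R (α + σ - (2 * B α β / B β β) • δ) h2 *
          wgen B R (α + σ) hασ * wgen B R α hα := by
  obtain ⟨m1, e1⟩ := conj_wgen B R hsym hclos (tgen B R β δ hβ hβδ)⁻¹ α hα
  obtain ⟨m2, e2⟩ := conj_wgen B R hsym hclos (tgen B R β δ hβ hβδ)⁻¹ (α + σ) hασ
  have hv1 : piW B R hsym (tgen B R β δ hβ hβδ)⁻¹ α = α - (2 * B α β / B β β) • δ :=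
    piW_tgen_inv B R hsym β δ hβ hδ hβδ α
  have hv2 : piW B R hsym (tgen B R β δ hβ hβδ)⁻¹ (α + σ)
      = α + σ - (2 * B α β / B β β) • δ := by
    rw [piW_tgen_inv B R hsym β δ hβ hδ hβδ (α + σ)]
    have e : B (α + σ) β = B α β := by
      rw [map_add, LinearMap.add_apply, hσ β, add_zero]
    rw [e]
  refine ⟨by rw [← hv1]; exact m1, by rw [← hv2]; exact m2, ?_⟩
  have key : (tgen B R β δ hβ hβδ)⁻¹ * (tgen B R α σ hα hασ)⁻¹ * tgen B R β δ hβ hβδ *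
      tgen B R α σ hα hασ
      = ((tgen B R β δ hβ hβδ)⁻¹ * wgen B R α hα * ((tgen B R β δ hβ hβδ)⁻¹)⁻¹) *
        ((tgen B R β δ hβ hβδ)⁻¹ * wgen B R (α + σ) hασ * ((tgen B R β δ hβ hβδ)⁻¹)⁻¹) *
        (wgen B R (α + σ) hασ * wgen B R α hα) := by
    generalize tgen B R β δ hβ hβδ = x
    simp only [tgen, mul_inv_rev, wgen_inv, inv_inv]
    group
  rw [key, e1, e2]
  have r1 : wgen B R (piW B R hsym (tgen B R β δ hβ hβδ)⁻¹ α) m1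
      = wgen B R (α - (2 * B α β / B β β) • δ) (by rw [← hv1]; exact m1) :=
    wgen_eq B R hv1
  have r2 : wgen B R (piW B R hsym (tgen B R β δ hβ hβδ)⁻¹ (α + σ)) m2
      = wgen B R (α + σ - (2 * B α β / B β β) • δ) (by rw [← hv2]; exact m2) :=
    wgen_eq B R hv2
  rw [r1, r2, ← mul_assoc]

end CPI

/-- If `α, α' ∈ R` lie in the same `W`-orbit and `β, β' ∈ R` satisfy
`(α, β^∨) = (α', β'^∨)`, then `[t̂_β^δ, t̂_α^σ] = [t̂_{β'}^δ, t̂_{α'}^σ]` in `Ŵ`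
(with `[x,y] = x⁻¹y⁻¹xy`). -/
theorem commutator_pairing_invariance {V : Type*} [AddCommGroup V] [Module ℝ V]
    (B : V →ₗ[ℝ] V →ₗ[ℝ] ℝ) (R : Set V)
    (hsym : ∀ u v : V, B u v = B v u)
    (hpsd : ∀ v : V, 0 ≤ B v v)
    (hnon : ∀ α ∈ R, B α α ≠ 0)
    (hclos : ∀ α ∈ R, ∀ β ∈ R, reflMap B α β ∈ R)
    (α α' β β' : V) (hα : α ∈ R) (hα' : α' ∈ R) (hβ : β ∈ R) (hβ' : β' ∈ R)
    (horb : WOrbit B R α α')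
    (hpair : 2 * B α β / B β β = 2 * B α' β' / B β' β')
    (σ δ : V) (hσ : ∀ u : V, B σ u = 0) (hδ : ∀ u : V, B δ u = 0)
    (hασ : α + σ ∈ R) (hβδ : β + δ ∈ R) (hβ'δ : β' + δ ∈ R) :
    ∃ hα'σ : α' + σ ∈ R,
      (tgen B R β δ hβ hβδ)⁻¹ * (tgen B R α σ hα hασ)⁻¹ *
          tgen B R β δ hβ hβδ * tgen B R α σ hα hασ =
        (tgen B R β' δ hβ' hβ'δ)⁻¹ * (tgen B R α' σ hα' hα'σ)⁻¹ *
          tgen B R β' δ hβ' hβ'δ * tgen B R α' σ hα' hα'σ := by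
  obtain ⟨l, hl⟩ := horb
  have hl' : α' = CPI.wfold B R l α := hl
  have hfσ : CPI.wfold B R l σ = σ := CPI.wfold_rad B R l σ hσ
  have hfδ : CPI.wfold B R l δ = δ := CPI.wfold_rad B R l δ hδ
  have hfασ : CPI.wfold B R l (α + σ) = α' + σ := by
    rw [CPI.wfold_add, hfσ, ← hl']
  have hα'σR : α' + σ ∈ R := by rw [← hfασ]; exact CPI.wfold_mem B R hclos l hασ
  refine ⟨hα'σR, ?_⟩
  obtain ⟨h1, h2, E⟩ := CPI.comm_decomp B R hsym hclos α β σ δ hα hβ hσ hδ hασ hβδ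
  obtain ⟨h1', h2', E'⟩ := CPI.comm_decomp B R hsym hclos α' β' σ δ hα' hβ' hσ hδ hα'σR hβ'δ
  -- centrality of the commutator
  have hπinvx : ∀ u, CPI.piW B R hsym (tgen B R β δ hβ hβδ)⁻¹ u
      = u - (2 * B u β / B β β) • δ := CPI.piW_tgen_inv B R hsym β δ hβ hδ hβδ
  have hπinvy : ∀ u, CPI.piW B R hsym (tgen B R α σ hα hασ)⁻¹ u
      = u - (2 * B u α / B α α) • σ := CPI.piW_tgen_inv B R hsym α σ hα hσ hασ
  have hAB : (CPI.piW B R hsym (tgen B R β δ hβ hβδ))⁻¹ *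
        (CPI.piW B R hsym (tgen B R α σ hα hασ))⁻¹
      = (CPI.piW B R hsym (tgen B R α σ hα hασ))⁻¹ *
        (CPI.piW B R hsym (tgen B R β δ hβ hβδ))⁻¹ := by
    rw [← map_inv, ← map_inv]
    refine Equiv.ext fun u => ?_
    rw [Equiv.Perm.mul_apply, Equiv.Perm.mul_apply]
    simp only [hπinvx, hπinvy]
    simp only [map_sub, map_smul, LinearMap.sub_apply, LinearMap.smul_apply, smul_eq_mul,
      hσ, hδ, mul_zero, sub_zero]
    abel
  have hπc : CPI.piW B R hsym ((tgen B R β δ hβ hβδ)⁻¹ * (tgen B R α σ hα hασ)⁻¹ *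
      tgen B R β δ hβ hβδ * tgen B R α σ hα hασ) = 1 := by
    rw [map_mul, map_mul, map_mul, map_inv, map_inv, hAB]
    group
  have hcomm : ∀ j : R,
      ((tgen B R β δ hβ hβδ)⁻¹ * (tgen B R α σ hα hασ)⁻¹ *
        tgen B R β δ hβ hβδ * tgen B R α σ hα hασ) *
          PresentedGroup.of (rels := eawRels B R) j
        = PresentedGroup.of (rels := eawRels B R) j *
          ((tgen B R β δ hβ hβδ)⁻¹ * (tgen B R α σ hα hασ)⁻¹ *
            tgen B R β δ hβ hβδ * tgen B R α σ hα hασ) := by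
    intro j
    obtain ⟨m, e⟩ := CPI.conj_wgen B R hsym hclos
      ((tgen B R β δ hβ hβδ)⁻¹ * (tgen B R α σ hα hασ)⁻¹ *
        tgen B R β δ hβ hβδ * tgen B R α σ hα hασ) (j : V) j.2
    have hv : CPI.piW B R hsym ((tgen B R β δ hβ hβδ)⁻¹ * (tgen B R α σ hα hασ)⁻¹ *
        tgen B R β δ hβ hβδ * tgen B R α σ hα hασ) (j : V) = (j : V) := by
      rw [hπc, Equiv.Perm.one_apply]
    have e2 : ((tgen B R β δ hβ hβδ)⁻¹ * (tgen B R α σ hα hασ)⁻¹ *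
        tgen B R β δ hβ hβδ * tgen B R α σ hα hασ) * wgen B R (j : V) j.2 *
        ((tgen B R β δ hβ hβδ)⁻¹ * (tgen B R α σ hα hασ)⁻¹ *
        tgen B R β δ hβ hβδ * tgen B R α σ hα hασ)⁻¹ = wgen B R (j : V) j.2 := by
      rw [e]; exact CPI.wgen_eq B R hv
    exact mul_inv_eq_iff_eq_mul.mp e2
  have hcg : ∀ L : List R,
      ((tgen B R β δ hβ hβδ)⁻¹ * (tgen B R α σ hα hασ)⁻¹ *
        tgen B R β δ hβ hβδ * tgen B R α σ hα hασ) * CPI.gprod B R L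
      = CPI.gprod B R L * ((tgen B R β δ hβ hβδ)⁻¹ * (tgen B R α σ hα hασ)⁻¹ *
        tgen B R β δ hβ hβδ * tgen B R α σ hα hασ) := by
    intro L
    induction L with
    | nil => simp [CPI.gprod]
    | cons j L ih =>
        rw [CPI.gprod_cons, ← mul_assoc, hcomm j, mul_assoc, ih, ← mul_assoc]
  have hgc : CPI.gprod B R l * ((tgen B R β δ hβ hβδ)⁻¹ * (tgen B R α σ hα hασ)⁻¹ *
        tgen B R β δ hβ hβδ * tgen B R α σ hα hασ) * (CPI.gprod B R l)⁻¹
      = (tgen B R β δ hβ hβδ)⁻¹ * (tgen B R α σ hα hασ)⁻¹ *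
        tgen B R β δ hβ hβδ * tgen B R α σ hα hασ := by
    rw [← hcg l, mul_assoc, mul_inv_cancel, mul_one]
  obtain ⟨k1, f1⟩ := CPI.conj_wgen B R hsym hclos (CPI.gprod B R l)
    (α - (2 * B α β / B β β) • δ) h1
  obtain ⟨k2, f2⟩ := CPI.conj_wgen B R hsym hclos (CPI.gprod B R l)
    (α + σ - (2 * B α β / B β β) • δ) h2
  obtain ⟨k3, f3⟩ := CPI.conj_wgen B R hsym hclos (CPI.gprod B R l) (α + σ) hασ
  obtain ⟨k4, f4⟩ := CPI.conj_wgen B R hsym hclos (CPI.gprod B R l) α hα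
  have q1 : CPI.piW B R hsym (CPI.gprod B R l) (α - (2 * B α β / B β β) • δ)
      = α' - (2 * B α' β' / B β' β') • δ := by
    rw [CPI.piW_gprod, CPI.wfold_sub, CPI.wfold_smul, hfδ, ← hl', hpair]
  have q2 : CPI.piW B R hsym (CPI.gprod B R l) (α + σ - (2 * B α β / B β β) • δ)
      = α' + σ - (2 * B α' β' / B β' β') • δ := by
    rw [CPI.piW_gprod, CPI.wfold_sub, CPI.wfold_smul, hfδ, CPI.wfold_add, hfσ, ← hl', hpair]
  have q3 : CPI.piW B R hsym (CPI.gprod B R l) (α + σ) = α' + σ := by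
    rw [CPI.piW_gprod]; exact hfασ
  have q4 : CPI.piW B R hsym (CPI.gprod B R l) α = α' := by
    rw [CPI.piW_gprod, ← hl']
  have r1 : wgen B R (CPI.piW B R hsym (CPI.gprod B R l) (α - (2 * B α β / B β β) • δ)) k1
      = wgen B R (α' - (2 * B α' β' / B β' β') • δ) h1' := CPI.wgen_eq B R q1
  have r2 : wgen B R (CPI.piW B R hsym (CPI.gprod B R l)
        (α + σ - (2 * B α β / B β β) • δ)) k2
      = wgen B R (α' + σ - (2 * B α' β' / B β' β') • δ) h2' := CPI.wgen_eq B R q2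
  have r3 : wgen B R (CPI.piW B R hsym (CPI.gprod B R l) (α + σ)) k3
      = wgen B R (α' + σ) hα'σR := CPI.wgen_eq B R q3
  have r4 : wgen B R (CPI.piW B R hsym (CPI.gprod B R l) α) k4
      = wgen B R α' hα' := CPI.wgen_eq B R q4
  calc (tgen B R β δ hβ hβδ)⁻¹ * (tgen B R α σ hα hασ)⁻¹ *
          tgen B R β δ hβ hβδ * tgen B R α σ hα hασ
      = CPI.gprod B R l * ((tgen B R β δ hβ hβδ)⁻¹ * (tgen B R α σ hα hασ)⁻¹ *
          tgen B R β δ hβ hβδ * tgen B R α σ hα hασ) * (CPI.gprod B R l)⁻¹ := hgc.symm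
    _ = CPI.gprod B R l * (wgen B R (α - (2 * B α β / B β β) • δ) h1 *
          wgen B R (α + σ - (2 * B α β / B β β) • δ) h2 *
          wgen B R (α + σ) hασ * wgen B R α hα) * (CPI.gprod B R l)⁻¹ := by rw [E]
    _ = (CPI.gprod B R l * wgen B R (α - (2 * B α β / B β β) • δ) h1 *
            (CPI.gprod B R l)⁻¹) *
          (CPI.gprod B R l * wgen B R (α + σ - (2 * B α β / B β β) • δ) h2 *
            (CPI.gprod B R l)⁻¹) *
          (CPI.gprod B R l * wgen B R (α + σ) hασ * (CPI.gprod B R l)⁻¹) *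
          (CPI.gprod B R l * wgen B R α hα * (CPI.gprod B R l)⁻¹) := by group
    _ = wgen B R (CPI.piW B R hsym (CPI.gprod B R l) (α - (2 * B α β / B β β) • δ)) k1 *
          wgen B R (CPI.piW B R hsym (CPI.gprod B R l)
            (α + σ - (2 * B α β / B β β) • δ)) k2 *
          wgen B R (CPI.piW B R hsym (CPI.gprod B R l) (α + σ)) k3 *
          wgen B R (CPI.piW B R hsym (CPI.gprod B R l) α) k4 := by rw [f1, f2, f3, f4]
    _ = wgen B R (α' - (2 * B α' β' / B β' β') • δ) h1' *
          wgen B R (α' + σ - (2 * B α' β' / B β' β') • δ) h2' *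
          wgen B R (α' + σ) hα'σR * wgen B R α' hα' := by rw [r1, r2, r3, r4]
    _ = (tgen B R β' δ hβ' hβ'δ)⁻¹ * (tgen B R α' σ hα' hα'σR)⁻¹ *
          tgen B R β' δ hβ' hβ'δ * tgen B R α' σ hα' hα'σR := E'.symm
end

section
/- Let β ∈ R and let O = {w(β) : w ∈ W} be its W-orbit. Then there exists a group homomorphism Φ : Ŵ → ℤ/2ℤ such that Φ(ŵ_α) = 1 for every α ∈ O and Φ(ŵ_α) = 0 for every α ∈ R∖O. Consequently, ŵ_β does not belong to the subgroup of Ŵ generated by {ŵ_α : α ∈ R∖O}. -/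
/-- Let `β ∈ R` and let `O` be its `W`-orbit.  Then there is a group homomorphism
`Φ : Ŵ → ℤ/2ℤ` with `Φ(ŵ_α) = 1` for `α ∈ O` and `Φ(ŵ_α) = 0` for `α ∈ R∖O`.
Consequently, `ŵ_β` is not in the subgroup generated by `{ŵ_α : α ∈ R∖O}`. -/
theorem orbit_parity_hom {V : Type*} [AddCommGroup V] [Module ℝ V]
    (B : V →ₗ[ℝ] V →ₗ[ℝ] ℝ) (R : Set V)
    (hsym : ∀ u v : V, B u v = B v u)
    (hpsd : ∀ v : V, 0 ≤ B v v)
    (hnon : ∀ α ∈ R, B α α ≠ 0)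
    (hclos : ∀ α ∈ R, ∀ β ∈ R, reflMap B α β ∈ R)
    (β : V) (hβ : β ∈ R) :
    (∃ Φ : EAW B R →* Multiplicative (ZMod 2),
        ∀ (α : V) (hα : α ∈ R),
          (WOrbit B R β α → Φ (wgen B R α hα) = Multiplicative.ofAdd (1 : ZMod 2)) ∧
          (¬ WOrbit B R β α → Φ (wgen B R α hα) = Multiplicative.ofAdd (0 : ZMod 2))) ∧
      wgen B R β hβ ∉
        Subgroup.closure {w : EAW B R |
          ∃ (α : V) (hα : α ∈ R), ¬ WOrbit B R β α ∧ w = wgen B R α hα} := by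
  classical
  have hinv : ∀ α : V, B α α ≠ 0 → ∀ u, reflMap B α (reflMap B α u) = u := by
    intro α hα u
    simp only [reflMap, map_sub, LinearMap.sub_apply, map_smul, LinearMap.smul_apply,
      smul_eq_mul]
    have h : (2 * B u α / B α α) + (2 * (B u α - 2 * B u α / B α α * B α α) / B α α) = 0 := by
      field_simp
      ring
    rw [sub_sub, ← add_smul, h, zero_smul, sub_zero]
  have hmono : ∀ (α : V), α ∈ R → ∀ u : V, WOrbit B R β u → WOrbit B R β (reflMap B α u) := by
    rintro α hα u ⟨l, hl⟩
    exact ⟨⟨α, hα⟩ :: l, by simp [hl]⟩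
  have hiff : ∀ (α : V), α ∈ R → ∀ u : V,
      (WOrbit B R β (reflMap B α u) ↔ WOrbit B R β u) := by
    intro α hα u
    constructor
    · intro h
      have := hmono α hα _ h
      rwa [hinv α (hnon α hα) u] at this
    · exact hmono α hα u
  set f : R → Multiplicative (ZMod 2) := fun α =>
    if WOrbit B R β (α : V) then Multiplicative.ofAdd 1 else Multiplicative.ofAdd 0 with hf
  have hkey : ∀ a b : Multiplicative (ZMod 2), a * b * a * b⁻¹ = 1 := by decide
  have hsq : ∀ a : Multiplicative (ZMod 2), a * a = 1 := by decide
  have hlift : ∀ r ∈ eawRels B R, FreeGroup.lift f r = 1 := by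
    rintro r (⟨α, rfl⟩ | ⟨α, β', γ, hγ, rfl⟩)
    · simp [map_mul, hsq]
    · have hfg : f γ = f β' := by
        have h2 : WOrbit B R β (γ : V) ↔ WOrbit B R β (β' : V) := by
          rw [hγ]; exact hiff (α : V) α.2 (β' : V)
        simp only [hf]
        by_cases h : WOrbit B R β (β' : V) <;> simp [h2, h]
      simp only [map_mul, map_inv, FreeGroup.lift_apply_of, hfg]
      exact hkey _ _
  refine ⟨⟨PresentedGroup.toGroup hlift, ?_⟩, ?_⟩
  · intro α hα
    have h0 : PresentedGroup.toGroup hlift (wgen B R α hα) = f ⟨α, hα⟩ :=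
      PresentedGroup.toGroup.of hlift
    constructor
    · intro h; rw [h0]; simp [hf, h]
    · intro h; rw [h0]; simp [hf, h]
  · intro hmem
    have hker : Subgroup.closure {w : EAW B R |
        ∃ (α : V) (hα : α ∈ R), ¬ WOrbit B R β α ∧ w = wgen B R α hα} ≤
        (PresentedGroup.toGroup hlift).ker := by
      rw [Subgroup.closure_le]
      rintro w ⟨α, hα, hno, rfl⟩
      have h0 : PresentedGroup.toGroup hlift (wgen B R α hα) = f ⟨α, hα⟩ :=
        PresentedGroup.toGroup.of hlift
      simp [MonoidHom.mem_ker, h0, hf, hno]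
    have h1 : PresentedGroup.toGroup hlift (wgen B R β hβ) = 1 := hker hmem
    have h2 : PresentedGroup.toGroup hlift (wgen B R β hβ) = Multiplicative.ofAdd 1 := by
      have h0 : PresentedGroup.toGroup hlift (wgen B R β hβ) = f ⟨β, hβ⟩ :=
        PresentedGroup.toGroup.of hlift
      rw [h0]; simp [hf, show WOrbit B R β β from ⟨[], rfl⟩]
    rw [h1] at h2
    exact absurd h2 (by decide)
end
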